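/- arXiv:1112.4765 — 5 statements merged into one kernel-verified Lean document; each statement's English description precedes it below -/
import Mathlib

section
/- Let ‖·‖_K and ‖·‖_L be two norms on ℝⁿ with ‖x‖_K ≤ ‖x‖_L ≤ λ‖x‖_K for all x and some λ ≥ 1. Then the map π(x) = (‖x‖_K/‖x‖_L)·x, defined for x ≠ 0, is (2λ+1)-Lipschitz with respect to the metric induced by ‖·‖_K on its domain. -/
open MeasureTheory Metric Set

/-- The `ε`-expansion of a set with respect to a distance function `d`. -/
def expandBy {X : Type*} (d : X → X → ℝ) (A : Set X) (ε : ℝ) : Set X :=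
  {x | ∃ a ∈ A, d x a ≤ ε}

/-- The concentration function of a metric probability space, where the
metric is given by the distance function `d`. -/
noncomputable def concFn {X : Type*} [MeasurableSpace X] (d : X → X → ℝ)
    (μ : Measure X) (ε : ℝ) : ℝ :=
  sSup {r | ∃ A : Set X, MeasurableSet A ∧ (1 : ℝ)/2 ≤ (μ A).toReal ∧
    r = 1 - (μ (expandBy d A ε)).toReal}

/-- `m` is a median of `f` with respect to `μ`. -/
def IsMedian {X : Type*} [MeasurableSpace X] (μ : Measure X) (f : X → ℝ) (m : ℝ) : Prop :=
  (1 : ℝ)/2 ≤ (μ {x | f x ≤ m}).toReal ∧ (1 : ℝ)/2 ≤ (μ {x | m ≤ f x}).toReal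

/-!
Write `a = p x`, `A = q x`, `b = p y`, `B = q y` and `s = a / A`, `t = b / B`, so that
`π x - π y = s • (x - y) + (s - t) • y`. The first term has `p`-size at most `p (x - y)`
since `s ≤ 1`. For the second, assume `b ≤ a`; then `b ≤ A`, and
`A (s - t) = (a - b) + t (B - A)` bounds `|s - t| b` by `p (x - y) + q (x - y)`.
Since `p (x - y) ≤ q (x - y) ≤ λ p (x - y)`, the total `2 p (x - y) + q (x - y)` is at most
`(2λ + 1) p (x - y)`.
-/

namespace Seminorm

variable {E : Type*} [AddCommGroup E] [Module ℝ E] {p q : Seminorm ℝ E}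

lemma div_apply_nonneg (x : E) : 0 ≤ p x / q x :=
  div_nonneg (apply_nonneg p x) (apply_nonneg q x)

lemma div_apply_le_one (hpq : ∀ x, p x ≤ q x) (x : E) : p x / q x ≤ 1 :=
  div_le_one_of_le₀ (hpq x) (apply_nonneg q x)

/-- Also true when `q x = 0`, since then `p x = 0`. -/
lemma div_apply_mul_apply (hpq : ∀ x, p x ≤ q x) (x : E) : p x / q x * q x = p x := by
  rcases (apply_nonneg q x).eq_or_lt with hq | hq
  · have hp : p x = 0 := le_antisymm (hq ▸ hpq x) (apply_nonneg p x)
    rw [← hq, hp, zero_div, zero_mul]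
  · exact div_mul_cancel₀ _ hq.ne'

lemma abs_div_apply_sub_div_apply_mul_le (hpq : ∀ x, p x ≤ q x) {x y : E} (hyx : p y ≤ p x) :
    |p x / q x - p y / q y| * p y ≤ p (x - y) + q (x - y) := by
  set t := p y / q y
  have hA : p x / q x * q x - t * q x = (p x - p y) + t * (q y - q x) := by
    rw [div_apply_mul_apply hpq x, ← div_apply_mul_apply hpq y]; ring
  calc |p x / q x - t| * p y
      ≤ |p x / q x - t| * q x := by gcongr; exact hyx.trans (hpq x)
    _ = |(p x - p y) + t * (q y - q x)| := by
      rw [← hA, ← sub_mul, abs_mul, abs_of_nonneg (apply_nonneg q x)]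
    _ ≤ |p x - p y| + t * |q x - q y| := by
      rw [abs_sub_comm (q x)]
      exact (abs_add_le _ _).trans_eq (by rw [abs_mul, abs_of_nonneg (div_apply_nonneg y)])
    _ ≤ p (x - y) + 1 * q (x - y) := by
      gcongr
      · exact abs_sub_map_le_sub p x y
      · exact div_apply_le_one hpq y
      · exact abs_sub_map_le_sub q x y
    _ = p (x - y) + q (x - y) := by rw [one_mul]

lemma apply_smul_sub_smul_le_of_le (hpq : ∀ x, p x ≤ q x) {x y : E} (hyx : p y ≤ p x) :
    p ((p x / q x) • x - (p y / q y) • y) ≤ 2 * p (x - y) + q (x - y) := by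
  have hsplit : (p x / q x) • x - (p y / q y) • y
      = (p x / q x) • (x - y) + (p x / q x - p y / q y) • y := by module
  calc p ((p x / q x) • x - (p y / q y) • y)
      ≤ p x / q x * p (x - y) + |p x / q x - p y / q y| * p y := by
        rw [hsplit]
        refine (map_add_le_add p _ _).trans_eq ?_
        rw [map_smul_eq_mul, map_smul_eq_mul, Real.norm_eq_abs, Real.norm_eq_abs,
          abs_of_nonneg (div_apply_nonneg x)]
    _ ≤ 1 * p (x - y) + (p (x - y) + q (x - y)) := by
      gcongr
      · exact div_apply_le_one hpq x
      · exact abs_div_apply_sub_div_apply_mul_le hpq hyx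
    _ = 2 * p (x - y) + q (x - y) := by ring

lemma apply_smul_sub_smul_le (hpq : ∀ x, p x ≤ q x) (x y : E) :
    p ((p x / q x) • x - (p y / q y) • y) ≤ 2 * p (x - y) + q (x - y) := by
  rcases le_total (p y) (p x) with hyx | hxy
  · exact apply_smul_sub_smul_le_of_le hpq hyx
  · rw [map_sub_rev p, map_sub_rev p x, map_sub_rev q x]
    exact apply_smul_sub_smul_le_of_le hpq hxy

end Seminorm

theorem stmt3_general {n : ℕ} (nK nL : Seminorm ℝ (Fin n → ℝ))
    (lam : ℝ)
    (h1 : ∀ x, nK x ≤ nL x) (h2 : ∀ x, nL x ≤ lam * nK x)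
    (x y : Fin n → ℝ) :
    nK ((nK x / nL x) • x - (nK y / nL y) • y) ≤ (2 * lam + 1) * nK (x - y) := by
  have hK := h1 (x - y)
  have hL := h2 (x - y)
  calc nK ((nK x / nL x) • x - (nK y / nL y) • y)
      ≤ 2 * nK (x - y) + nL (x - y) := Seminorm.apply_smul_sub_smul_le h1 x y
    _ ≤ (2 * lam + 1) * nK (x - y) := by linarith

theorem stmt3 {n : ℕ} (nK nL : Seminorm ℝ (Fin n → ℝ))
    (hKdef : ∀ x, nK x = 0 → x = 0)
    (lam : ℝ) (hlam : 1 ≤ lam)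
    (h1 : ∀ x, nK x ≤ nL x) (h2 : ∀ x, nL x ≤ lam * nK x)
    (x y : Fin n → ℝ) (hx : x ≠ 0) (hy : y ≠ 0) :
    nK ((nK x / nL x) • x - (nK y / nL y) • y) ≤ (2 * lam + 1) * nK (x - y) :=
  stmt3_general nK nL lam h1 h2 x y
end

section
/- Let X be an n-dimensional normed space with closed unit ball K, and let μ be a symmetric Borel probability measure supported on K with concentration function α_μ. Suppose there exists a linear map T : X → ℓ∞^N such that d⁻¹·‖x‖ ≤ ‖Tx‖_∞ ≤ ‖x‖ for all x ∈ X (a d-embedding). Then for every 0 < ε < 1/d with α_μ(ε) > 0, we have N ≥ (1/2)·α_μ(ε)⁻¹·(1 − μ(dε·K)). -/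
open MeasureTheory Metric Set

/-!
Each coordinate `x ↦ (T x) i` is odd and 1-Lipschitz. Oddness and the symmetry of `μ` make `0`
a median of it, and the `ε`-expansion of `{(T x) i ≤ 0}` misses `{ε < (T x) i}`, so
`μ {ε < |(T x) i|} ≤ 2 α_μ(ε)`. If `d ε < ‖x‖` then `ε < ‖T x‖_∞`, so some coordinate exceeds `ε`
in absolute value, and a union bound over the `N` coordinates gives `μ {d ε < ‖x‖} ≤ 2 N α_μ(ε)`.
-/

section Concentration

variable {X : Type*} [MeasurableSpace X]

lemma one_sub_measureReal_expandBy_le_concFn {d : X → X → ℝ} {μ : Measure X} {A : Set X}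
    (hA : MeasurableSet A) (hμA : 1 / 2 ≤ μ.real A) (ε : ℝ) :
    1 - μ.real (expandBy d A ε) ≤ concFn d μ ε :=
  le_csSup ⟨1, by rintro r ⟨B, -, -, rfl⟩; simp⟩ ⟨A, hA, hμA, rfl⟩

lemma measureReal_lt_le_concFn [PseudoMetricSpace X] [OpensMeasurableSpace X]
    (μ : Measure X) [IsProbabilityMeasure μ] {g : X → ℝ} (hg : LipschitzWith 1 g) {m : ℝ}
    (hm : 1 / 2 ≤ μ.real {x | g x ≤ m}) (ε : ℝ) :
    μ.real {x | m + ε < g x} ≤ concFn dist μ ε := by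
  have hdisj : Disjoint (expandBy dist {x | g x ≤ m} ε) {x | m + ε < g x} := by
    refine Set.disjoint_left.2 fun x ⟨a, (ha : g a ≤ m), hxa⟩ (hx : m + ε < g x) => ?_
    have hgxa := (le_abs_self _).trans (hg.dist_le_mul_of_le hxa)
    rw [NNReal.coe_one, one_mul] at hgxa
    linarith
  have hsum : μ.real (expandBy dist {x | g x ≤ m} ε) + μ.real {x | m + ε < g x} ≤ 1 := by
    rw [← measureReal_union hdisj (measurableSet_lt measurable_const hg.continuous.measurable)]
    exact measureReal_le_one
  linarith [one_sub_measureReal_expandBy_le_concFn (d := dist)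
    (measurableSet_le hg.continuous.measurable measurable_const) hm ε]

lemma isMedian_zero_of_map_neg_eq [Neg X] [MeasurableNeg X] {μ : Measure X}
    [IsProbabilityMeasure μ] (hsymm : μ.map (fun x => -x) = μ) {g : X → ℝ} (hg : Measurable g)
    (hodd : ∀ x, g (-x) = -g x) : IsMedian μ g 0 := by
  have hflip : μ.real {x | 0 ≤ g x} = μ.real {x | g x ≤ 0} := by
    nth_rw 1 [← hsymm]
    rw [map_measureReal_apply measurable_neg (measurableSet_le measurable_const hg)]
    simp [Set.preimage, hodd]
  have hcover : 1 ≤ μ.real {x | g x ≤ 0} + μ.real {x | 0 ≤ g x} :=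
    calc 1 = μ.real univ := probReal_univ.symm
      _ ≤ μ.real ({x | g x ≤ 0} ∪ {x | 0 ≤ g x}) := measureReal_mono fun x _ => le_total (g x) 0
      _ ≤ _ := measureReal_union_le _ _
  exact ⟨(by linarith : 1 / 2 ≤ μ.real {x | g x ≤ 0}), (by linarith : 1 / 2 ≤ μ.real {x | 0 ≤ g x})⟩

lemma measureReal_lt_abs_le_two_mul_concFn [PseudoMetricSpace X] [OpensMeasurableSpace X]
    [Neg X] [MeasurableNeg X] {μ : Measure X} [IsProbabilityMeasure μ]
    (hsymm : μ.map (fun x => -x) = μ) {g : X → ℝ} (hg : LipschitzWith 1 g)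
    (hodd : ∀ x, g (-x) = -g x) (ε : ℝ) :
    μ.real {x | ε < |g x|} ≤ 2 * concFn dist μ ε := by
  have hg' : LipschitzWith 1 (fun x => -g x) :=
    LipschitzWith.mk_one fun x y => by simpa [dist_neg_neg] using hg.dist_le_mul x y
  have hpos := measureReal_lt_le_concFn μ hg
    (isMedian_zero_of_map_neg_eq hsymm hg.continuous.measurable hodd).1 ε
  have hneg := measureReal_lt_le_concFn μ hg'
    (isMedian_zero_of_map_neg_eq hsymm hg'.continuous.measurable (by simp [hodd])).1 ε
  rw [zero_add] at hpos hneg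
  calc μ.real {x | ε < |g x|} = μ.real ({x | ε < g x} ∪ {x | ε < -g x}) := by
        simp only [lt_abs, ofPred_or]
    _ ≤ μ.real {x | ε < g x} + μ.real {x | ε < -g x} := measureReal_union_le _ _
    _ ≤ 2 * concFn dist μ ε := by linarith

end Concentration

lemma LinearMap.lipschitzWith_one_apply {E ι : Type*} [SeminormedAddCommGroup E] [Module ℝ E]
    [Fintype ι] (T : E →ₗ[ℝ] (ι → ℝ)) (hT : ∀ x, ‖T x‖ ≤ ‖x‖) (i : ι) :
    LipschitzWith 1 (fun x => T x i) := by
  have hT' := AddMonoidHomClass.lipschitz_of_bound_nnnorm T 1 fun x => by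
    simpa [← NNReal.coe_le_coe] using hT x
  exact mul_one (1 : NNReal) ▸ (LipschitzWith.eval i).comp hT'

lemma setOf_lt_norm_subset_iUnion_lt_abs {E ι : Type*} [SeminormedAddCommGroup E] [Fintype ι]
    {T : E → ι → ℝ} {d ε : ℝ} (hd : 0 < d) (hε : 0 ≤ ε) (hT : ∀ x, d⁻¹ * ‖x‖ ≤ ‖T x‖) :
    {x | d * ε < ‖x‖} ⊆ ⋃ i, {x | ε < |T x i|} := by
  intro x (hx : d * ε < ‖x‖)
  by_contra hcov
  simp only [mem_iUnion, mem_ofPred_eq, not_exists, not_lt] at hcov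
  have hTx : ‖T x‖ ≤ ε :=
    (pi_norm_le_iff_of_nonneg hε).2 fun i => (Real.norm_eq_abs _).trans_le (hcov i)
  have hxT := (inv_mul_le_iff₀ hd).1 (hT x)
  nlinarith

theorem stmt8_general {E : Type*} [NormedAddCommGroup E] [NormedSpace ℝ E]
    [MeasurableSpace E] [BorelSpace E]
    (N : ℕ) (μ : Measure E) [IsProbabilityMeasure μ]
    (hsymm : μ.map (fun x => -x) = μ)
    (T : E →ₗ[ℝ] (Fin N → ℝ)) (d : ℝ) (hd : 1 ≤ d)
    (hT1 : ∀ x, d⁻¹ * ‖x‖ ≤ ‖T x‖) (hT2 : ∀ x, ‖T x‖ ≤ ‖x‖)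
    (ε : ℝ) (hε1 : 0 < ε)
    (hα : 0 < concFn dist μ ε) :
    (1/2) * (concFn dist μ ε)⁻¹ * (1 - (μ {x | ‖x‖ ≤ d * ε}).toReal) ≤ (N : ℝ) := by
  set α := concFn dist μ ε
  have htail : μ.real {x | d * ε < ‖x‖} ≤ N * (2 * α) :=
    calc μ.real {x | d * ε < ‖x‖} ≤ μ.real (⋃ i, {x | ε < |T x i|}) :=
          measureReal_mono (setOf_lt_norm_subset_iUnion_lt_abs (one_pos.trans_le hd) hε1.le hT1)
      _ ≤ ∑ i, μ.real {x | ε < |T x i|} := measureReal_iUnion_fintype_le _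
      _ ≤ ∑ _i : Fin N, 2 * α := Finset.sum_le_sum fun i _ =>
          measureReal_lt_abs_le_two_mul_concFn hsymm (T.lipschitzWith_one_apply hT2 i)
            (fun x => by simp) ε
      _ = N * (2 * α) := by simp
  have hcompl : 1 - μ.real {x | ‖x‖ ≤ d * ε} = μ.real {x | d * ε < ‖x‖} := by
    rw [← probReal_compl_eq_one_sub (measurableSet_le measurable_norm measurable_const)]
    simp only [compl_ofPred, not_le]
  calc 1 / 2 * α⁻¹ * (1 - μ.real {x | ‖x‖ ≤ d * ε})
      ≤ 1 / 2 * α⁻¹ * (N * (2 * α)) := by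
        rw [hcompl]; exact mul_le_mul_of_nonneg_left htail (by positivity)
    _ = N := by field_simp

theorem stmt8 {E : Type*} [NormedAddCommGroup E] [NormedSpace ℝ E]
    [FiniteDimensional ℝ E] [MeasurableSpace E] [BorelSpace E]
    (N : ℕ) (μ : Measure E) [IsProbabilityMeasure μ]
    (hsupp : μ (Metric.closedBall 0 1) = 1)
    (hsymm : μ.map (fun x => -x) = μ)
    (T : E →ₗ[ℝ] (Fin N → ℝ)) (d : ℝ) (hd : 1 ≤ d)
    (hT1 : ∀ x, d⁻¹ * ‖x‖ ≤ ‖T x‖) (hT2 : ∀ x, ‖T x‖ ≤ ‖x‖)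
    (ε : ℝ) (hε1 : 0 < ε) (hε2 : ε < 1 / d)
    (hα : 0 < concFn dist μ ε) :
    (1/2) * (concFn dist μ ε)⁻¹ * (1 - (μ {x | ‖x‖ ≤ d * ε}).toReal) ≤ (N : ℝ) :=
  stmt8_general N μ hsymm T d hd hT1 hT2 ε hε1 hα
end

section
/- Let ν be a symmetric Borel probability measure supported on the cube B_∞^n = [−1,1]^n, and let α_ν be its concentration function with respect to the sup-norm metric. Then for any 0 < ε < 1, α_ν(ε) ≥ (1/(2n))·(1 − ν(ε·B_∞^n)). -/
open MeasureTheory Metric Set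

theorem stmt9 {n : ℕ} (hn : 0 < n) (ν : Measure (Fin n → ℝ)) [IsProbabilityMeasure ν]
    (hsupp : ν {x | ‖x‖ ≤ 1} = 1)
    (hsymm : ν.map (fun x => -x) = ν)
    (ε : ℝ) (hε1 : 0 < ε) (hε2 : ε < 1) :
    (1 / (2 * (n : ℝ))) * (1 - (ν {x | ‖x‖ ≤ ε}).toReal) ≤ concFn dist ν ε := by
  have hmn : Measurable (fun x : Fin n → ℝ => -x) := measurable_neg
  have hsym : ∀ S : Set (Fin n → ℝ), MeasurableSet S →
      ν ((fun x => -x) ⁻¹' S) = ν S := by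
    intro S hS
    conv_rhs => rw [← hsymm]
    rw [Measure.map_apply hmn hS]
  have hcoord : ∀ i : Fin n, Measurable (fun x : Fin n → ℝ => x i) :=
    fun i => measurable_pi_apply i
  set p : ℝ := 1 - (ν {x | ‖x‖ ≤ ε}).toReal with hp
  -- measurable sets
  have hms : ∀ i : Fin n, MeasurableSet {x : Fin n → ℝ | ε < x i} :=
    fun i => measurableSet_lt measurable_const (hcoord i)
  have hfin : ∀ S : Set (Fin n → ℝ), ν S ≠ ⊤ := fun S => measure_ne_top ν S
  set f : Fin n → ℝ := fun i => (ν {x : Fin n → ℝ | ε < x i}).toReal with hf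
  -- symmetry: ν {x_i < -ε} = ν {ε < x_i}
  have hsym1 : ∀ i, (ν {x : Fin n → ℝ | x i < -ε}).toReal = f i := by
    intro i
    have : (fun x : Fin n → ℝ => -x) ⁻¹' {x | x i < -ε} = {x | ε < x i} := by
      ext x; simp [neg_lt]
    rw [hf]
    congr 1
    rw [← hsym {x | x i < -ε} (measurableSet_lt (hcoord i) measurable_const), this]
  -- complement covered by slabs
  have hcover : {x : Fin n → ℝ | ‖x‖ ≤ ε}ᶜ ⊆
      ⋃ i : Fin n, ({x | ε < x i} ∪ {x | x i < -ε}) := by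
    intro x hx
    simp only [mem_compl_iff, mem_setOf_eq, not_le] at hx
    have : ¬ ∀ i, ‖x i‖ ≤ ε := by
      intro h
      exact absurd ((pi_norm_le_iff_of_nonneg hε1.le).2 h) (not_le.2 hx)
    push_neg at this
    obtain ⟨i, hi⟩ := this
    rw [Real.norm_eq_abs] at hi
    rcases lt_abs.1 hi with h | h
    · exact mem_iUnion.2 ⟨i, Or.inl h⟩
    · exact mem_iUnion.2 ⟨i, Or.inr (by simpa [lt_neg] using h)⟩
  have hsum : p ≤ ∑ i : Fin n, 2 * f i := by
    have h1 : ν ({x : Fin n → ℝ | ‖x‖ ≤ ε}ᶜ) ≤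
        ∑ i : Fin n, (ν {x | ε < x i} + ν {x | x i < -ε}) :=
      le_trans (measure_mono hcover)
        (le_trans (measure_iUnion_fintype_le _ _) (Finset.sum_le_sum (fun i _ => measure_union_le _ _)))
    have h2 : (ν ({x : Fin n → ℝ | ‖x‖ ≤ ε}ᶜ)).toReal ≤
        ∑ i : Fin n, ((ν {x : Fin n → ℝ | ε < x i}).toReal + (ν {x : Fin n → ℝ | x i < -ε}).toReal) := by
      have := ENNReal.toReal_mono (by
        refine (ENNReal.sum_lt_top.2 ?_).ne
        intro i _
        exact ENNReal.add_lt_top.2 ⟨(hfin _).lt_top, (hfin _).lt_top⟩) h1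
      simpa [ENNReal.toReal_sum, ENNReal.toReal_add (hfin _) (hfin _)] using this
    have hcompl : (ν ({x : Fin n → ℝ | ‖x‖ ≤ ε}ᶜ)).toReal = p := by
      rw [hp, measure_compl (by
        exact measurableSet_le (continuous_norm.measurable) measurable_const) (hfin _)]
      rw [measure_univ]
      rw [ENNReal.toReal_sub_of_le (prob_le_one) (by simp)]
      simp
    rw [hcompl] at h2
    refine h2.trans (le_of_eq ?_)
    apply Finset.sum_congr rfl
    intro i _
    rw [hsym1 i]; ring
  -- pigeonhole
  have hex : ∃ i : Fin n, p / n ≤ 2 * f i := by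
    by_contra h
    push_neg at h
    have : ∑ i : Fin n, 2 * f i < ∑ i : Fin n, p / n :=
      Finset.sum_lt_sum_of_nonempty (Finset.univ_nonempty_iff.2 ⟨⟨0, hn⟩⟩) (fun i _ => h i)
    rw [Finset.sum_const, Finset.card_univ, Fintype.card_fin, nsmul_eq_mul,
      mul_div_cancel₀ _ (by exact_mod_cast hn.ne' : (n:ℝ) ≠ 0)] at this
    linarith [hsum]
  obtain ⟨i, hi⟩ := hex
  -- the half-space
  set A : Set (Fin n → ℝ) := {x | x i ≤ 0} with hA
  have hAm : MeasurableSet A := measurableSet_le (hcoord i) measurable_const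
  have hAhalf : (1:ℝ)/2 ≤ (ν A).toReal := by
    have hAcompl : (ν Aᶜ).toReal = 1 - (ν A).toReal := by
      rw [measure_compl hAm (hfin _), measure_univ,
        ENNReal.toReal_sub_of_le prob_le_one (by simp)]
      simp
    have hAc : (ν Aᶜ).toReal ≤ (ν A).toReal := by
      have h1 : Aᶜ = {x : Fin n → ℝ | 0 < x i} := by
        ext x; simp [hA, not_le]
      have h2 : (fun x : Fin n → ℝ => -x) ⁻¹' {x | 0 < x i} = {x | x i < 0} := by
        ext x; simp [neg_pos]
      have h3 : ν Aᶜ = ν {x : Fin n → ℝ | x i < 0} := by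
        rw [h1, ← hsym {x | 0 < x i} (measurableSet_lt measurable_const (hcoord i)), h2]
      rw [h3]
      exact ENNReal.toReal_mono (hfin _) (measure_mono (fun x hx => show x i ≤ 0 from le_of_lt (hx : x i < 0)))
    linarith
  -- expansion bound
  have hexp : expandBy dist A ε ⊆ {x : Fin n → ℝ | x i ≤ ε} := by
    rintro x ⟨a, ha, hd⟩
    have : dist (x i) (a i) ≤ dist x a := dist_le_pi_dist x a i
    have h2 : |x i - a i| ≤ ε := by
      rw [← Real.dist_eq]; exact this.trans hd
    have := abs_le.1 h2
    have hai : a i ≤ 0 := ha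
    simp only [mem_setOf_eq]
    linarith [this.2]
  have hkey : f i ≤ 1 - (ν (expandBy dist A ε)).toReal := by
    have h1 : (ν (expandBy dist A ε)).toReal ≤ (ν {x : Fin n → ℝ | x i ≤ ε}).toReal :=
      ENNReal.toReal_mono (hfin _) (measure_mono hexp)
    have h2 : (ν {x : Fin n → ℝ | x i ≤ ε}).toReal = 1 - f i := by
      have hc : {x : Fin n → ℝ | x i ≤ ε} = {x : Fin n → ℝ | ε < x i}ᶜ := by
        ext x; simp [not_lt]
      rw [hc, measure_compl (hms i) (hfin _), measure_univ,
        ENNReal.toReal_sub_of_le prob_le_one (by simp)]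
      simp [hf]
    linarith
  -- conclude via sSup
  have hmem : 1 - (ν (expandBy dist A ε)).toReal ∈
      {r | ∃ B : Set (Fin n → ℝ), MeasurableSet B ∧ (1 : ℝ)/2 ≤ (ν B).toReal ∧
        r = 1 - (ν (expandBy dist B ε)).toReal} :=
    ⟨A, hAm, hAhalf, rfl⟩
  have hbdd : BddAbove {r | ∃ B : Set (Fin n → ℝ), MeasurableSet B ∧ (1 : ℝ)/2 ≤ (ν B).toReal ∧
      r = 1 - (ν (expandBy dist B ε)).toReal} := by
    refine ⟨1, ?_⟩
    rintro r ⟨B, _, _, rfl⟩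
    have : 0 ≤ (ν (expandBy dist B ε)).toReal := ENNReal.toReal_nonneg
    linarith
  have hle : 1 - (ν (expandBy dist A ε)).toReal ≤ concFn dist ν ε := le_csSup hbdd hmem
  have hn' : (0:ℝ) < n := by exact_mod_cast hn
  calc (1 / (2 * (n : ℝ))) * p = (p / n) / 2 := by ring
    _ ≤ f i := by linarith
    _ ≤ 1 - (ν (expandBy dist A ε)).toReal := hkey
    _ ≤ concFn dist ν ε := hle
end

section
/- Let ‖·‖_K, ‖·‖_L be norms on ℝⁿ with ‖·‖_K ≤ ‖·‖_L ≤ λ‖·‖_K (λ ≥ 1), let u : [0,∞) → [0,∞) be Lipschitz with u(0)=0, define U(x) = (u(‖x‖_L)/‖x‖_L)·x for x ≠ 0, and let μ be a probability measure on ℝⁿ. Let m_L be a median of ‖·‖_L and m a median of u(‖·‖_L), both with respect to μ, and set δ = ε/(7 m_L ‖u‖_Lip) for ε > 0. If x, y ∈ ℝⁿ \ {0} satisfy ‖x − y‖_K ≤ δ m_L/λ, |‖y‖_L − m_L| < δ m_L, and |u(‖y‖_L) − m| < δ m, then ‖U(x) − U(y)‖_L ≤ 7δ m_L ‖u‖_Lip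 = ε. -/
open MeasureTheory Metric Set

/-!
Write `a = ‖x‖`, `b = ‖y‖` and `c t = u t / t`, so that `U x = c a • x` and `|c t| ≤ Lip u`.
Splitting `U x - U y = c a • (x - y) + (c a - c b) • y` and using
`(c a - c b) b = c a (b - a) + (u a - u b)` shows that `U` is `3 Lip u`-Lipschitz.
The hypotheses on `x - y` give `‖x - y‖_L ≤ δ m_L`, hence the bound `3 δ m_L Lip u ≤ ε`.
-/

-- The paper's `U`; by the convention `t / 0 = 0` it is `0` where `p x = 0`.
noncomputable def radialMap {E : Type*} [AddCommGroup E] [Module ℝ E]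
    (p : Seminorm ℝ E) (u : ℝ → ℝ) (x : E) : E :=
  (u (p x) / p x) • x

section LipschitzFromZero

variable {u : ℝ → ℝ} {Lu : ℝ}

theorem div_self_mul_cancel (hu0 : u 0 = 0) (t : ℝ) : u t / t * t = u t :=
  div_mul_cancel_of_imp fun ht => ht ▸ hu0

theorem abs_le_mul_of_lipschitz_zero (hu0 : u 0 = 0)
    (hulip : ∀ s t, 0 ≤ s → 0 ≤ t → |u s - u t| ≤ Lu * |s - t|) {t : ℝ} (ht : 0 ≤ t) :
    |u t| ≤ Lu * t := by
  simpa [hu0, abs_of_nonneg ht] using hulip t 0 ht le_rfl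

theorem abs_div_self_le (hLu : 0 ≤ Lu) (hu0 : u 0 = 0)
    (hulip : ∀ s t, 0 ≤ s → 0 ≤ t → |u s - u t| ≤ Lu * |s - t|) {t : ℝ} (ht : 0 ≤ t) :
    |u t / t| ≤ Lu := by
  rw [abs_div, abs_of_nonneg ht]
  exact div_le_of_le_mul₀ ht hLu (abs_le_mul_of_lipschitz_zero hu0 hulip ht)

theorem abs_div_self_sub_mul_le (hLu : 0 ≤ Lu) (hu0 : u 0 = 0)
    (hulip : ∀ s t, 0 ≤ s → 0 ≤ t → |u s - u t| ≤ Lu * |s - t|) {a b : ℝ}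
    (ha : 0 ≤ a) (hb : 0 ≤ b) :
    |u a / a - u b / b| * b ≤ 2 * Lu * |a - b| := by
  have hsplit : (u a / a - u b / b) * b = u a / a * (b - a) + (u a - u b) := by
    linear_combination div_self_mul_cancel hu0 a - div_self_mul_cancel hu0 b
  calc |u a / a - u b / b| * b = |u a / a * (b - a) + (u a - u b)| := by
        rw [← hsplit, abs_mul, abs_of_nonneg hb]
    _ ≤ |u a / a| * |b - a| + |u a - u b| := by
        rw [← abs_mul]; exact abs_add_le _ _
    _ ≤ Lu * |a - b| + Lu * |a - b| := by
        rw [abs_sub_comm b a]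
        gcongr
        · exact abs_div_self_le hLu hu0 hulip ha
        · exact hulip a b ha hb
    _ = 2 * Lu * |a - b| := by ring

theorem radialMap_sub_le {E : Type*} [AddCommGroup E] [Module ℝ E] (p : Seminorm ℝ E)
    (hLu : 0 ≤ Lu) (hu0 : u 0 = 0)
    (hulip : ∀ s t, 0 ≤ s → 0 ≤ t → |u s - u t| ≤ Lu * |s - t|) (x y : E) :
    p (radialMap p u x - radialMap p u y) ≤ 3 * Lu * p (x - y) := by
  set a := p x
  set b := p y
  have hab : |a - b| ≤ p (x - y) := abs_sub_map_le_sub p x y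
  calc p (radialMap p u x - radialMap p u y)
      = p ((u a / a) • (x - y) + (u a / a - u b / b) • y) := by
        rw [smul_sub, sub_smul, sub_add_sub_cancel]; rfl
    _ ≤ |u a / a| * p (x - y) + |u a / a - u b / b| * b := by
        refine (map_add_le_add p _ _).trans_eq ?_
        rw [map_smul_eq_mul, map_smul_eq_mul, Real.norm_eq_abs, Real.norm_eq_abs]
    _ ≤ Lu * p (x - y) + 2 * Lu * p (x - y) := by
        have hc := abs_div_self_le hLu hu0 hulip (apply_nonneg p x)
        have hcc := abs_div_self_sub_mul_le hLu hu0 hulip (apply_nonneg p x) (apply_nonneg p y)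
        have hLab : 2 * Lu * |a - b| ≤ 2 * Lu * p (x - y) := by gcongr
        exact add_le_add (mul_le_mul_of_nonneg_right hc (apply_nonneg p _)) (hcc.trans hLab)
    _ = 3 * Lu * p (x - y) := by ring

end LipschitzFromZero

theorem stmt13_general {n : ℕ} (nK nL : Seminorm ℝ (Fin n → ℝ))
    (lam : ℝ) (hlam : 1 ≤ lam)
    (h2 : ∀ x, nL x ≤ lam * nK x)
    (u : ℝ → ℝ) (Lu : ℝ) (hLupos : 0 < Lu) (hu0 : u 0 = 0)
    (hulip : ∀ s t, 0 ≤ s → 0 ≤ t → |u s - u t| ≤ Lu * |s - t|)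
    (mL : ℝ)
    (ε δ : ℝ) (hδ : δ = ε / (7 * mL * Lu))
    (x y : Fin n → ℝ)
    (hxy : nK (x - y) ≤ δ * mL / lam)
    (hyL : |nL y - mL| < δ * mL) :
    nL ((u (nL x) / nL x) • x - (u (nL y) / nL y) • y) ≤ ε := by
  have hδmL : 0 < δ * mL := (abs_nonneg _).trans_lt hyL
  have hε : ε = 7 * Lu * (δ * mL) := by
    have hmL : mL ≠ 0 := by rintro rfl; simp at hδmL
    rw [hδ]
    field_simp
  have hlam0 : 0 < lam := zero_lt_one.trans_le hlam
  have hnL : nL (x - y) ≤ δ * mL :=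
    calc nL (x - y) ≤ lam * nK (x - y) := h2 _
      _ ≤ lam * (δ * mL / lam) := mul_le_mul_of_nonneg_left hxy hlam0.le
      _ = δ * mL := mul_div_cancel₀ _ hlam0.ne'
  calc nL (radialMap nL u x - radialMap nL u y) ≤ 3 * Lu * nL (x - y) :=
        radialMap_sub_le nL hLupos.le hu0 hulip x y
    _ ≤ 3 * Lu * (δ * mL) := by gcongr
    _ ≤ ε := by rw [hε]; nlinarith [mul_pos hLupos hδmL]

theorem stmt13 {n : ℕ} (nK nL : Seminorm ℝ (Fin n → ℝ))
    (hLdef : ∀ x, nL x = 0 → x = 0)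
    (lam : ℝ) (hlam : 1 ≤ lam)
    (h1 : ∀ x, nK x ≤ nL x) (h2 : ∀ x, nL x ≤ lam * nK x)
    (u : ℝ → ℝ) (Lu : ℝ) (hLupos : 0 < Lu) (hu0 : u 0 = 0)
    (hunn : ∀ t, 0 ≤ t → 0 ≤ u t)
    (hulip : ∀ s t, 0 ≤ s → 0 ≤ t → |u s - u t| ≤ Lu * |s - t|)
    (μ : Measure (Fin n → ℝ)) [IsProbabilityMeasure μ]
    (mL m : ℝ) (hmL : IsMedian μ (fun x => nL x) mL)
    (hm : IsMedian μ (fun x => u (nL x)) m)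
    (ε δ : ℝ) (hε : 0 < ε) (hδ : δ = ε / (7 * mL * Lu))
    (x y : Fin n → ℝ) (hx : x ≠ 0) (hy : y ≠ 0)
    (hxy : nK (x - y) ≤ δ * mL / lam)
    (hyL : |nL y - mL| < δ * mL)
    (hyu : |u (nL y) - m| < δ * m) :
    nL ((u (nL x) / nL x) • x - (u (nL y) / nL y) • y) ≤ ε :=
  stmt13_general nK nL lam hlam h2 u Lu hLupos hu0 hulip mL ε δ hδ x y hxy hyL
end

section
/- Let ‖·‖_K, ‖·‖_L be norms on ℝⁿ with ‖·‖_K ≤ ‖·‖_L ≤ λ‖·‖_K, let u : [0,∞) → [0,∞) be Lipschitz with u(0)=0 and Lipschitz constant ‖u‖_Lip > 0, let μ be a Borel probability measure on ℝⁿ, define U(x) = (u(‖x‖_L)/‖x‖_L)x on supp(μ), and let ν be the push-forward of μ by U. Let m_L be a median of ‖·‖_L and m a median of u(‖·‖_L), both with respect to μ, with m_L > 0. Denote by α_K the concentration function of (ℝⁿ, ‖·‖_K, μ) and by α_L that of (ℝⁿ, ‖·‖_L, ν). Then for every ε > 0 with 8·(α_K(ε/(7‖u‖_Lip λ)) + α_K(ε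 m/(7‖u‖_Lip² m_L))) ≤ 1, we have α_L(ε) ≤ 16·α_K(ε/(14‖u‖_Lip λ)). -/
open MeasureTheory Metric Set

/-! The radial map `U x = (u ‖x‖_L / ‖x‖_L) x` is `3‖u‖_Lip`-Lipschitz for `‖·‖_L`: if
`‖x‖_L ≤ ‖y‖_L`, split `U x - U y = (u ‖x‖_L / ‖x‖_L) (x - y) + (u ‖x‖_L / ‖x‖_L - u ‖y‖_L / ‖y‖_L) y`;
the first coefficient is at most `‖u‖_Lip` because `u 0 = 0`, and the second term is at most
`2‖u‖_Lip (‖y‖_L - ‖x‖_L)`. With `‖·‖_L ≤ λ‖·‖_K`, `U` maps `δ`-close points for `‖·‖_K` to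
`ε`-close points for `‖·‖_L` when `δ = ε / (14‖u‖_Lip λ)`. Pulling a set `A` with `ν(A) ≥ 1/2`
back to `U⁻¹(A)`, which has `μ`-measure `≥ 1/2` and whose `δ`-expansion lies in `U⁻¹(A_ε)`,
gives `α_L(ε) ≤ α_K(δ)`. -/

lemma concFn_nonneg {X : Type*} [MeasurableSpace X] (d : X → X → ℝ) (μ : Measure X)
    [IsProbabilityMeasure μ] (ε : ℝ) : 0 ≤ concFn d μ ε :=
  Real.sSup_nonneg <| by
    rintro _ ⟨A, -, -, rfl⟩
    simpa using ENNReal.toReal_le_of_le_ofReal zero_le_one (by simpa using prob_le_one)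

lemma le_concFn {X : Type*} [MeasurableSpace X] (d : X → X → ℝ) (μ : Measure X) (ε : ℝ)
    {A : Set X} (hA : MeasurableSet A) (hμA : (1 : ℝ) / 2 ≤ (μ A).toReal) :
    1 - (μ (expandBy d A ε)).toReal ≤ concFn d μ ε :=
  le_csSup ⟨1, by rintro _ ⟨B, -, -, rfl⟩; exact sub_le_self _ ENNReal.toReal_nonneg⟩
    ⟨A, hA, hμA, rfl⟩

lemma concFn_map_le {X Y : Type*} [MeasurableSpace X] [MeasurableSpace Y]
    {dX : X → X → ℝ} {dY : Y → Y → ℝ} {μ : Measure X} [IsProbabilityMeasure μ] {U : X → Y}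
    (hU : Measurable U) {ε δ : ℝ} (hUδ : ∀ x y, dX x y ≤ δ → dY (U x) (U y) ≤ ε) :
    concFn dY (μ.map U) ε ≤ concFn dX μ δ := by
  refine Real.sSup_le ?_ (concFn_nonneg dX μ δ)
  rintro _ ⟨A, hA, hμA, rfl⟩
  have hexpand : expandBy dX (U ⁻¹' A) δ ⊆ U ⁻¹' expandBy dY A ε := by
    rintro x ⟨a, ha, hxa⟩
    exact ⟨U a, ha, hUδ x a hxa⟩
  have hmeasure : μ (expandBy dX (U ⁻¹' A) δ) ≤ μ.map U (expandBy dY A ε) :=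
    (measure_mono hexpand).trans (Measure.le_map_apply hU.aemeasurable _)
  rw [Measure.map_apply hU hA] at hμA
  have := le_concFn dX μ δ (hU hA) hμA
  have := ENNReal.toReal_mono (measure_ne_top _ _) hmeasure
  linarith

section LipschitzProfile

variable {u : ℝ → ℝ} {Lu : ℝ}

lemma abs_le_mul_of_lipschitz_of_map_zero (hu0 : u 0 = 0)
    (hulip : ∀ s t, 0 ≤ s → 0 ≤ t → |u s - u t| ≤ Lu * |s - t|) {r : ℝ} (hr : 0 ≤ r) :
    |u r| ≤ Lu * r := by
  simpa [hu0, abs_of_nonneg hr] using hulip r 0 hr le_rfl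

lemma abs_div_self_le_of_lipschitz (hLu : 0 ≤ Lu) (hu0 : u 0 = 0)
    (hulip : ∀ s t, 0 ≤ s → 0 ≤ t → |u s - u t| ≤ Lu * |s - t|) {r : ℝ} (hr : 0 ≤ r) :
    |u r / r| ≤ Lu := by
  rcases hr.eq_or_lt with rfl | hr
  · simpa using hLu
  rw [abs_div, abs_of_pos hr, div_le_iff₀ hr]
  exact abs_le_mul_of_lipschitz_of_map_zero hu0 hulip hr.le

lemma abs_div_sub_div_mul_le_of_lipschitz (hLu : 0 ≤ Lu) (hu0 : u 0 = 0)
    (hulip : ∀ s t, 0 ≤ s → 0 ≤ t → |u s - u t| ≤ Lu * |s - t|) {s t : ℝ} (hs : 0 ≤ s)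
    (hst : s ≤ t) : |u s / s - u t / t| * t ≤ 2 * Lu * (t - s) := by
  rcases hs.eq_or_lt with rfl | hs
  · calc |u 0 / 0 - u t / t| * t = |u t / t| * t := by simp
      _ ≤ Lu * t := by gcongr; exact abs_div_self_le_of_lipschitz hLu hu0 hulip hst
      _ ≤ 2 * Lu * (t - 0) := by nlinarith
  have ht : 0 < t := hs.trans_le hst
  have hsplit : (u s / s - u t / t) * t = u s / s * (t - s) + (u s - u t) := by
    field_simp
    ring
  calc |u s / s - u t / t| * t = |u s / s * (t - s) + (u s - u t)| := by
        rw [← hsplit, abs_mul, abs_of_pos ht]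
    _ ≤ |u s / s| * (t - s) + |u s - u t| := by
        grw [abs_add_le, abs_mul, abs_of_nonneg (sub_nonneg.2 hst)]
    _ ≤ Lu * (t - s) + Lu * (t - s) := by
        gcongr
        · exact abs_div_self_le_of_lipschitz hLu hu0 hulip hs.le
        · simpa [abs_sub_comm s t, abs_of_nonneg (sub_nonneg.2 hst)] using
            hulip s t hs.le ht.le
    _ = 2 * Lu * (t - s) := by ring

end LipschitzProfile

namespace Seminorm

variable {E : Type*}

/-- The map `U` of the statement. It vanishes on the kernel of `p`, because `u 0 / 0 = 0`. -/
noncomputable def radialRescale [AddCommGroup E] [Module ℝ E] (p : Seminorm ℝ E) (u : ℝ → ℝ) (x : E) : E :=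
  (u (p x) / p x) • x

lemma radialRescale_sub_le [AddCommGroup E] [Module ℝ E] (p : Seminorm ℝ E) {u : ℝ → ℝ}
    {Lu : ℝ} (hLu : 0 ≤ Lu) (hu0 : u 0 = 0)
    (hulip : ∀ s t, 0 ≤ s → 0 ≤ t → |u s - u t| ≤ Lu * |s - t|) (x y : E) :
    p (p.radialRescale u x - p.radialRescale u y) ≤ 3 * Lu * p (x - y) := by
  wlog hxy : p x ≤ p y generalizing x y
  · rw [map_sub_rev p, map_sub_rev p x]
    exact this y x (le_of_not_ge hxy)
  have hsplit : p.radialRescale u x - p.radialRescale u y =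
      (u (p x) / p x) • (x - y) + (u (p x) / p x - u (p y) / p y) • y := by
    simp only [radialRescale, smul_sub, sub_smul]
    abel
  have hgap : p y - p x ≤ p (x - y) := by
    rw [map_sub_rev]
    exact (le_abs_self _).trans (abs_sub_map_le_sub p y x)
  calc p (p.radialRescale u x - p.radialRescale u y)
      ≤ |u (p x) / p x| * p (x - y) + |u (p x) / p x - u (p y) / p y| * p y := by
        rw [hsplit, ← Real.norm_eq_abs, ← Real.norm_eq_abs, ← map_smul_eq_mul, ← map_smul_eq_mul]
        exact map_add_le_add p _ _
    _ ≤ Lu * p (x - y) + 2 * Lu * (p y - p x) := by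
        gcongr ?_ * _ + ?_
        · exact abs_div_self_le_of_lipschitz hLu hu0 hulip (apply_nonneg p x)
        · exact abs_div_sub_div_mul_le_of_lipschitz hLu hu0 hulip (apply_nonneg p x) hxy
    _ ≤ 3 * Lu * p (x - y) := by nlinarith

lemma measurable_radialRescale [NormedAddCommGroup E] [NormedSpace ℝ E] [FiniteDimensional ℝ E]
    [MeasurableSpace E] [BorelSpace E] (p : Seminorm ℝ E) {u : ℝ → ℝ} {Lu : ℝ} (hLu : 0 ≤ Lu)
    (hulip : ∀ s t, 0 ≤ s → 0 ≤ t → |u s - u t| ≤ Lu * |s - t|) :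
    Measurable (p.radialRescale u) := by
  have hp : Continuous p := p.convexOn.locallyLipschitz.continuous
  have hu : ContinuousOn u (Ici 0) :=
    (LipschitzOnWith.of_dist_le_mul (K := ⟨Lu, hLu⟩) fun s hs t ht => by
      simp only [Real.dist_eq]
      exact hulip s t hs ht).continuousOn
  have hup : Measurable fun x => u (p x) :=
    (hu.comp_continuous hp fun x => apply_nonneg p x).measurable
  exact (hup.div hp.measurable).smul measurable_id

end Seminorm

theorem stmt14_general {n : ℕ} (nK nL : Seminorm ℝ (Fin n → ℝ))
    (lam : ℝ) (hlam : 1 ≤ lam)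
    (h2 : ∀ x, nL x ≤ lam * nK x)
    (u : ℝ → ℝ) (Lu : ℝ) (hLupos : 0 < Lu) (hu0 : u 0 = 0)
    (hulip : ∀ s t, 0 ≤ s → 0 ≤ t → |u s - u t| ≤ Lu * |s - t|)
    (μ : Measure (Fin n → ℝ)) [IsProbabilityMeasure μ]
    (ε : ℝ) (hε : 0 < ε) :
    concFn (fun x y => nL (x - y))
        (μ.map (fun x => (u (nL x) / nL x) • x)) ε ≤
      16 * concFn (fun x y => nK (x - y)) μ (ε / (14 * Lu * lam)) := by
  have hlam0 : 0 < lam := zero_lt_one.trans_le hlam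
  have hU : ∀ x y, nK (x - y) ≤ ε / (14 * Lu * lam) →
      nL (nL.radialRescale u x - nL.radialRescale u y) ≤ ε := fun x y hxy =>
    calc nL (nL.radialRescale u x - nL.radialRescale u y) ≤ 3 * Lu * nL (x - y) :=
          nL.radialRescale_sub_le hLupos.le hu0 hulip x y
      _ ≤ 3 * Lu * (lam * (ε / (14 * Lu * lam))) := by grw [h2, hxy]
      _ ≤ ε := by
          field_simp
          linarith
  calc concFn (fun x y => nL (x - y)) (μ.map (nL.radialRescale u)) ε
      ≤ concFn (fun x y => nK (x - y)) μ (ε / (14 * Lu * lam)) :=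
        concFn_map_le (nL.measurable_radialRescale hLupos.le hulip) hU
    _ ≤ 16 * concFn (fun x y => nK (x - y)) μ (ε / (14 * Lu * lam)) :=
        le_mul_of_one_le_left (concFn_nonneg _ _ _) (by norm_num)

theorem stmt14 {n : ℕ} (nK nL : Seminorm ℝ (Fin n → ℝ))
    (hLdef : ∀ x, nL x = 0 → x = 0)
    (lam : ℝ) (hlam : 1 ≤ lam)
    (h1 : ∀ x, nK x ≤ nL x) (h2 : ∀ x, nL x ≤ lam * nK x)
    (u : ℝ → ℝ) (Lu : ℝ) (hLupos : 0 < Lu) (hu0 : u 0 = 0)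
    (hunn : ∀ t, 0 ≤ t → 0 ≤ u t)
    (hulip : ∀ s t, 0 ≤ s → 0 ≤ t → |u s - u t| ≤ Lu * |s - t|)
    (μ : Measure (Fin n → ℝ)) [IsProbabilityMeasure μ]
    (mL m : ℝ) (hmL : IsMedian μ (fun x => nL x) mL)
    (hm : IsMedian μ (fun x => u (nL x)) m) (hmLpos : 0 < mL)
    (ε : ℝ) (hε : 0 < ε)
    (hsmall : 8 * (concFn (fun x y => nK (x - y)) μ (ε / (7 * Lu * lam)) +
      concFn (fun x y => nK (x - y)) μ (ε * m / (7 * Lu^2 * mL))) ≤ 1) :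
    concFn (fun x y => nL (x - y))
        (μ.map (fun x => (u (nL x) / nL x) • x)) ε ≤
      16 * concFn (fun x y => nK (x - y)) μ (ε / (14 * Lu * lam)) :=
  stmt14_general nK nL lam hlam h2 u Lu hLupos hu0 hulip μ ε hε
end
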